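/- arXiv:math/0602175 — 2 statements merged into one kernel-verified Lean document; each statement's English description precedes it below -/
import Mathlib

section
/- Let H : E₁ → E₂ be a C¹ map between finite-dimensional normed spaces. Suppose there are sequences of invertible linear maps Aₙ : E₂ → E₂ and Bₙ : E₁ → E₁ and C¹ maps Hₙ : E₁ → E₂ with H = Aₙ⁻¹ ∘ Hₙ ∘ Bₙ, such that ‖DHₙ(Bₙ y) − DHₙ(0)‖ ≤ C ‖Bₙ‖^β ‖y‖^β for a fixed β ∈ (0,1] and C > 0, and ‖Aₙ⁻¹‖ · ‖Bₙ‖^{1+β} → 0 as n → ∞. Then DH(y) = DH(0) for all y; hence H is affine. -/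
/-!
Conjugating by the linear maps gives `DH(y) - DH(0) = Aₙ⁻¹ ∘ (DHₙ(Bₙ y) - DHₙ(0)) ∘ Bₙ`, so the
Hölder bound on `DHₙ` yields `‖DH(y) - DH(0)‖ ≤ C ‖Aₙ⁻¹‖ ‖Bₙ‖^{1+β} ‖y‖^β`, which tends to zero.
Hence `DH` is constant, and a map with constant derivative is affine by the mean value theorem.
-/

open Filter Topology

section Conjugation

variable {𝕜 : Type*} [NontriviallyNormedField 𝕜]
  {E E' F F' : Type*} [NormedAddCommGroup E] [NormedSpace 𝕜 E] [NormedAddCommGroup E']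
  [NormedSpace 𝕜 E'] [NormedAddCommGroup F] [NormedSpace 𝕜 F] [NormedAddCommGroup F']
  [NormedSpace 𝕜 F'] {H : E → F'} {G : E' → F}

theorem fderiv_eq_comp_of_conj (e : F ≃L[𝕜] F') (B : E ≃L[𝕜] E')
    (hconj : ∀ y, H y = e (G (B y))) (x : E) :
    fderiv 𝕜 H x = (e : F →L[𝕜] F').comp ((fderiv 𝕜 G (B x)).comp (B : E →L[𝕜] E')) := by
  have hH : H = e ∘ G ∘ B := funext hconj
  rw [hH, e.comp_fderiv, B.comp_right_fderiv]

theorem norm_fderiv_sub_le_of_conj (e : F ≃L[𝕜] F') (B : E ≃L[𝕜] E')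
    (hconj : ∀ y, H y = e (G (B y))) (x y : E) :
    ‖fderiv 𝕜 H y - fderiv 𝕜 H x‖ ≤
      ‖(e : F →L[𝕜] F')‖ * ‖fderiv 𝕜 G (B y) - fderiv 𝕜 G (B x)‖ * ‖(B : E →L[𝕜] E')‖ := by
  rw [fderiv_eq_comp_of_conj e B hconj, fderiv_eq_comp_of_conj e B hconj,
    ← ContinuousLinearMap.comp_sub, ← ContinuousLinearMap.sub_comp]
  calc _ ≤ ‖(e : F →L[𝕜] F')‖ * ‖(fderiv 𝕜 G (B y) - fderiv 𝕜 G (B x)).comp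
          (B : E →L[𝕜] E')‖ := ContinuousLinearMap.opNorm_comp_le _ _
    _ ≤ _ := by
      rw [mul_assoc]
      gcongr
      exact ContinuousLinearMap.opNorm_comp_le _ _

end Conjugation

theorem eq_of_norm_sub_le_of_tendsto_zero {E ι : Type*} [NormedAddCommGroup E]
    {l : Filter ι} [l.NeBot] {a b : E} {u : ι → ℝ} (hle : ∀ i, ‖a - b‖ ≤ u i)
    (hu : Tendsto u l (𝓝 0)) : a = b :=
  sub_eq_zero.mp (norm_le_zero_iff.mp (ge_of_tendsto' hu hle))

theorem eq_add_of_fderiv_eq_const {𝕜 E F : Type*} [NontriviallyNormedField 𝕜]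
    [IsRCLikeNormedField 𝕜] [NormedAddCommGroup E] [NormedSpace 𝕜 E] [NormedAddCommGroup F]
    [NormedSpace 𝕜 F] {f : E → F} {L : E →L[𝕜] F} (hf : Differentiable 𝕜 f)
    (hf' : ∀ x, fderiv 𝕜 f x = L) (y : E) : f y = f 0 + L y := by
  have hg : Differentiable 𝕜 fun z => f 0 + L z := (differentiable_const _).add L.differentiable
  refine congrFun (eq_of_fderiv_eq hf hg (fun x => ?_) 0 (by simp)) y
  rw [hf', fderiv_const_add, L.fderiv]

theorem renormalized_holder_implies_affine_general {E₁ E₂ : Type*}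
    [NormedAddCommGroup E₁] [NormedSpace ℝ E₁]
    [NormedAddCommGroup E₂] [NormedSpace ℝ E₂]
    (H : E₁ → E₂) (hH : ContDiff ℝ 1 H)
    (A : ℕ → (E₂ ≃L[ℝ] E₂)) (B : ℕ → (E₁ ≃L[ℝ] E₁))
    (Hn : ℕ → E₁ → E₂)
    (β C : ℝ) (hβ0 : 0 < β)
    (hconj : ∀ n y, H y = (A n).symm (Hn n (B n y)))
    (hHolder : ∀ n y, ‖fderiv ℝ (Hn n) (B n y) - fderiv ℝ (Hn n) 0‖ ≤
      C * ‖(B n : E₁ →L[ℝ] E₁)‖ ^ β * ‖y‖ ^ β)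
    (hdecay : Tendsto
      (fun n => ‖((A n).symm : E₂ →L[ℝ] E₂)‖ * ‖(B n : E₁ →L[ℝ] E₁)‖ ^ (1 + β))
      atTop (nhds 0)) :
    ∀ y : E₁, fderiv ℝ H y = fderiv ℝ H 0 ∧ H y = H 0 + fderiv ℝ H 0 y := by
  have hderiv : ∀ y, fderiv ℝ H y = fderiv ℝ H 0 := by
    intro y
    refine eq_of_norm_sub_le_of_tendsto_zero (l := atTop) (fun n => ?_)
      (by simpa using (hdecay.const_mul C).mul_const (‖y‖ ^ β))
    set a := ‖((A n).symm : E₂ →L[ℝ] E₂)‖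
    set b := ‖(B n : E₁ →L[ℝ] E₁)‖
    calc ‖fderiv ℝ H y - fderiv ℝ H 0‖
        ≤ a * ‖fderiv ℝ (Hn n) (B n y) - fderiv ℝ (Hn n) (B n 0)‖ * b :=
          norm_fderiv_sub_le_of_conj (A n).symm (B n) (hconj n) 0 y
      _ ≤ a * (C * b ^ β * ‖y‖ ^ β) * b := by
          rw [map_zero]
          gcongr
          exact hHolder n y
      _ = C * (a * b ^ (1 + β)) * ‖y‖ ^ β := by
          rw [Real.rpow_one_add' (norm_nonneg _) (by positivity)]
          ring
  exact fun y => ⟨hderiv y, eq_add_of_fderiv_eq_const (hH.differentiable one_ne_zero) hderiv y⟩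

theorem renormalized_holder_implies_affine {E₁ E₂ : Type*}
    [NormedAddCommGroup E₁] [NormedSpace ℝ E₁] [FiniteDimensional ℝ E₁]
    [NormedAddCommGroup E₂] [NormedSpace ℝ E₂] [FiniteDimensional ℝ E₂]
    (H : E₁ → E₂) (hH : ContDiff ℝ 1 H)
    (A : ℕ → (E₂ ≃L[ℝ] E₂)) (B : ℕ → (E₁ ≃L[ℝ] E₁))
    (Hn : ℕ → E₁ → E₂) (hHn : ∀ n, ContDiff ℝ 1 (Hn n))
    (β C : ℝ) (hβ0 : 0 < β) (hβ1 : β ≤ 1) (hC : 0 < C)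
    (hconj : ∀ n y, H y = (A n).symm (Hn n (B n y)))
    (hHolder : ∀ n y, ‖fderiv ℝ (Hn n) (B n y) - fderiv ℝ (Hn n) 0‖ ≤
      C * ‖(B n : E₁ →L[ℝ] E₁)‖ ^ β * ‖y‖ ^ β)
    (hdecay : Tendsto
      (fun n => ‖((A n).symm : E₂ →L[ℝ] E₂)‖ * ‖(B n : E₁ →L[ℝ] E₁)‖ ^ (1 + β))
      atTop (nhds 0)) :
    ∀ y : E₁, fderiv ℝ H y = fderiv ℝ H 0 ∧ H y = H 0 + fderiv ℝ H 0 y :=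
  renormalized_holder_implies_affine_general H hH A B Hn β C hβ0 hconj hHolder hdecay
end

section
/- Let f : X → X be a map of a metric space and E a continuous assignment of linear maps as in a cocycle: A(x,n) = Df^n along an invariant bundle. Suppose the cocycle is conformal with respect to a β-Hölder family of norms, the conformal factors c_x = ‖A(x,1)‖ satisfy the Hölder bound with constant C and lower bound m > 0, and points x, z satisfy d(fⁿx, fⁿz) ≤ K₁ λⁿ for all n ≥ 0 with 0 < λ < 1. Then there is K such that ‖A(z,n)⁻¹‖·‖A(x,n)‖ ≤ K for all n ≥ 0, where K = ∏_{i≥0}(1 + (C/m)(K₁λ^i)^β). -/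
/-! The norm of `A(x, n)` is exactly the product `∏_{i<n} c(fⁱ x)` of conformal factors, so
`‖A(z, n)⁻¹‖ ‖A(x, n)‖ ≤ ∏_{i<n} c(fⁱ x) / c(fⁱ z)`. The Hölder bound gives
`c(fⁱ x) / c(fⁱ z) ≤ 1 + (|C| / m) (K₁ lⁱ)^β ≤ exp ((|C| / m) (K₁ lⁱ)^β)`, and the exponents form
a convergent geometric series with ratio `l^β < 1`. -/

open Finset Real

section Cocycle

variable {𝕜 X E : Type*} [NontriviallyNormedField 𝕜] [SeminormedAddCommGroup E]
  [NormedSpace 𝕜 E]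

def IsCocycle (f : X → X) (A : X → ℕ → (E ≃L[𝕜] E)) : Prop :=
  ∀ x n m, A x (n + m) = (A x n).trans (A (f^[n] x) m)

variable {f : X → X} {A : X → ℕ → (E ≃L[𝕜] E)}

theorem IsCocycle.apply_zero (hA : IsCocycle f A) (x : X) (v : E) : A x 0 v = v :=
  (A x 0).injective <| by simpa using (congrArg (· (A x 0 v)) (hA x 0 0)).symm

theorem IsCocycle.norm_apply_eq_prod (hA : IsCocycle f A) {c : X → ℝ}
    (hconf : ∀ x v, ‖A x 1 v‖ = c x * ‖v‖) (x : X) (n : ℕ) (v : E) :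
    ‖A x n v‖ = (∏ i ∈ range n, c (f^[i] x)) * ‖v‖ := by
  induction n with
  | zero => simp [hA.apply_zero]
  | succ n ih =>
    have hsplit : A x (n + 1) v = A (f^[n] x) 1 (A x n v) := by rw [hA x n 1]; rfl
    rw [hsplit, hconf, ih, prod_range_succ]
    ring

end Cocycle

namespace ContinuousLinearEquiv

variable {𝕜 E : Type*} [NontriviallyNormedField 𝕜] [SeminormedAddCommGroup E] [NormedSpace 𝕜 E]

theorem norm_le_of_norm_apply_eq (e : E ≃L[𝕜] E) {r : ℝ} (hr : 0 ≤ r)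
    (he : ∀ v, ‖e v‖ = r * ‖v‖) : ‖(e : E →L[𝕜] E)‖ ≤ r :=
  ContinuousLinearMap.opNorm_le_bound _ hr fun v => (he v).le

theorem norm_symm_le_of_norm_apply_eq (e : E ≃L[𝕜] E) {r : ℝ} (hr : 0 < r)
    (he : ∀ v, ‖e v‖ = r * ‖v‖) : ‖(e.symm : E →L[𝕜] E)‖ ≤ r⁻¹ := by
  refine ContinuousLinearMap.opNorm_le_bound _ (inv_nonneg.mpr hr.le) fun w => ?_
  have h := he (e.symm w)
  rw [e.apply_symm_apply] at h
  rw [coe_coe, h, inv_mul_cancel_left₀ hr.ne']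

end ContinuousLinearEquiv

theorem IsCocycle.norm_symm_mul_norm_le_prod_div {𝕜 X E : Type*} [NontriviallyNormedField 𝕜]
    [SeminormedAddCommGroup E] [NormedSpace 𝕜 E] {f : X → X} {A : X → ℕ → (E ≃L[𝕜] E)}
    (hA : IsCocycle f A) {c : X → ℝ} (hc : ∀ x, 0 < c x)
    (hconf : ∀ x v, ‖A x 1 v‖ = c x * ‖v‖) (x z : X) (n : ℕ) :
    ‖((A z n).symm : E →L[𝕜] E)‖ * ‖(A x n : E →L[𝕜] E)‖ ≤
      (∏ i ∈ range n, c (f^[i] x)) / ∏ i ∈ range n, c (f^[i] z) := by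
  rw [div_eq_inv_mul]
  exact mul_le_mul
    ((A z n).norm_symm_le_of_norm_apply_eq (prod_pos fun i _ => hc _)
      (hA.norm_apply_eq_prod hconf z n))
    ((A x n).norm_le_of_norm_apply_eq (prod_nonneg fun i _ => (hc _).le)
      (hA.norm_apply_eq_prod hconf x n))
    (norm_nonneg _) (inv_nonneg.mpr (prod_nonneg fun i _ => (hc _).le))

theorem div_le_exp_div_of_le_add {a b ε m : ℝ} (hm : 0 < m) (hb : m ≤ b) (hε : 0 ≤ ε)
    (hab : a ≤ b + ε) : a / b ≤ exp (ε / m) :=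
  calc a / b ≤ 1 + ε / b := by
        rw [div_le_iff₀ (hm.trans_le hb), add_mul, div_mul_cancel₀ _ (hm.trans_le hb).ne']
        linarith
    _ ≤ 1 + ε / m := by gcongr
    _ ≤ exp (ε / m) := by linarith [add_one_le_exp (ε / m)]

theorem prod_div_prod_le_exp_sum_div {ι : Type*} {s : Finset ι} {a b ε : ι → ℝ} {m : ℝ}
    (hm : 0 < m) (ha : ∀ i ∈ s, 0 ≤ a i) (hb : ∀ i ∈ s, m ≤ b i) (hε : ∀ i ∈ s, 0 ≤ ε i)
    (hab : ∀ i ∈ s, a i ≤ b i + ε i) :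
    (∏ i ∈ s, a i) / ∏ i ∈ s, b i ≤ exp ((∑ i ∈ s, ε i) / m) := by
  rw [← prod_div_distrib, sum_div, exp_sum]
  exact prod_le_prod (fun i hi => div_nonneg (ha i hi) (hm.le.trans (hb i hi)))
    fun i hi => div_le_exp_div_of_le_add hm (hb i hi) (hε i hi) (hab i hi)

theorem sum_range_rpow_le_of_le_geometric {d : ℕ → ℝ} {K l β : ℝ} (hβ : 0 < β) (hl0 : 0 ≤ l)
    (hl1 : l < 1) (hd0 : ∀ i, 0 ≤ d i) (hd : ∀ i, d i ≤ K * l ^ i) (n : ℕ) :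
    ∑ i ∈ range n, d i ^ β ≤ K ^ β / (1 - l ^ β) := by
  have hK : 0 ≤ K := by simpa using (hd0 0).trans (hd 0)
  have hlβ : l ^ β < 1 := rpow_lt_one hl0 hl1 hβ
  have hgeom := hasSum_geometric_of_lt_one (rpow_nonneg hl0 β) hlβ
  calc ∑ i ∈ range n, d i ^ β ≤ ∑ i ∈ range n, K ^ β * (l ^ β) ^ i := by
        gcongr with i
        calc d i ^ β ≤ (K * l ^ i) ^ β := rpow_le_rpow (hd0 i) (hd i) hβ.le
          _ = K ^ β * (l ^ β) ^ i := by
            rw [mul_rpow hK (by positivity), ← rpow_natCast, ← rpow_natCast, ← rpow_mul hl0,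
              ← rpow_mul hl0, mul_comm β]
    _ = K ^ β * ∑ i ∈ range n, (l ^ β) ^ i := (mul_sum _ _ _).symm
    _ ≤ K ^ β * (1 - l ^ β)⁻¹ := by
        gcongr
        exact hgeom.tsum_eq ▸ hgeom.summable.sum_le_tsum _ fun i _ => by positivity
    _ = K ^ β / (1 - l ^ β) := (div_eq_mul_inv _ _).symm

theorem conformal_cocycle_comparability_general {X : Type*} [MetricSpace X]
    {E : Type*} [NormedAddCommGroup E] [NormedSpace ℝ E]
    (f : X → X) (A : X → ℕ → (E ≃L[ℝ] E))
    (hcocycle : ∀ x n m, A x (n + m) = (A x n).trans (A (f^[n] x) m))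
    (c : X → ℝ) (hconf : ∀ (x : X) (v : E), ‖A x 1 v‖ = c x * ‖v‖)
    (C m β : ℝ) (hβ0 : 0 < β) (hm : 0 < m)
    (hlow : ∀ x, m ≤ c x)
    (hHolder : ∀ x z : X, |c x - c z| ≤ C * dist x z ^ β)
    (x z : X) (K₁ l : ℝ) (hl0 : 0 < l) (hl1 : l < 1)
    (hclose : ∀ n : ℕ, dist (f^[n] x) (f^[n] z) ≤ K₁ * l ^ n) :
    ∃ K : ℝ, ∀ n : ℕ,
      ‖((A z n).symm : E →L[ℝ] E)‖ * ‖(A x n : E →L[ℝ] E)‖ ≤ K := by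
  refine ⟨exp (|C| * (K₁ ^ β / (1 - l ^ β)) / m), fun n => ?_⟩
  have hc : ∀ y, 0 < c y := fun y => hm.trans_le (hlow y)
  have hstep : ∀ i ∈ range n,
      c (f^[i] x) ≤ c (f^[i] z) + |C| * dist (f^[i] x) (f^[i] z) ^ β := fun i _ => by
    have := (le_abs_self _).trans (hHolder (f^[i] x) (f^[i] z))
    have : C * dist (f^[i] x) (f^[i] z) ^ β ≤ |C| * dist (f^[i] x) (f^[i] z) ^ β := by
      gcongr; exact le_abs_self C
    linarith
  calc ‖((A z n).symm : E →L[ℝ] E)‖ * ‖(A x n : E →L[ℝ] E)‖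
      ≤ (∏ i ∈ range n, c (f^[i] x)) / ∏ i ∈ range n, c (f^[i] z) :=
        IsCocycle.norm_symm_mul_norm_le_prod_div hcocycle hc hconf x z n
    _ ≤ exp ((∑ i ∈ range n, |C| * dist (f^[i] x) (f^[i] z) ^ β) / m) :=
        prod_div_prod_le_exp_sum_div hm (fun i _ => (hc _).le) (fun i _ => hlow _)
          (fun i _ => by positivity) hstep
    _ ≤ exp (|C| * (K₁ ^ β / (1 - l ^ β)) / m) := by
        rw [← mul_sum]
        gcongr
        exact sum_range_rpow_le_of_le_geometric hβ0 hl0.le hl1 (fun i => dist_nonneg) hclose n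

/-- Lemma 4.8: for a conformal cocycle with β-Hölder conformal factors, forward
exponential closeness of orbits gives uniform comparability of cocycle norms. -/
theorem conformal_cocycle_comparability {X : Type*} [MetricSpace X]
    {E : Type*} [NormedAddCommGroup E] [NormedSpace ℝ E] [FiniteDimensional ℝ E]
    (f : X → X) (A : X → ℕ → (E ≃L[ℝ] E))
    (hcocycle : ∀ x n m, A x (n + m) = (A x n).trans (A (f^[n] x) m))
    (c : X → ℝ) (hconf : ∀ (x : X) (v : E), ‖A x 1 v‖ = c x * ‖v‖)
    (C m β : ℝ) (hβ0 : 0 < β) (hβ1 : β ≤ 1) (hm : 0 < m)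
    (hlow : ∀ x, m ≤ c x)
    (hHolder : ∀ x z : X, |c x - c z| ≤ C * dist x z ^ β)
    (x z : X) (K₁ l : ℝ) (hl0 : 0 < l) (hl1 : l < 1)
    (hclose : ∀ n : ℕ, dist (f^[n] x) (f^[n] z) ≤ K₁ * l ^ n) :
    ∃ K : ℝ, ∀ n : ℕ,
      ‖((A z n).symm : E →L[ℝ] E)‖ * ‖(A x n : E →L[ℝ] E)‖ ≤ K :=
  conformal_cocycle_comparability_general f A hcocycle c hconf C m β hβ0 hm hlow hHolder x z K₁ l
    hl0 hl1 hclose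
end
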